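/- Let 𝕂 be ℝ or ℂ and V a 𝕂-vector space. (a) A 4-linear map T : V⁴ → 𝕂 is an algebraic curvature tensor if and only if y_t* T = 12·T, where y_t ∈ 𝕂[S₄] is the Young symmetrizer of the tableau t with rows (1,3) and (2,4), i.e. y_t = Σ_{p∈H_t} Σ_{q∈V_t} sign(q)·(p∘q) with H_t = {id, (1 3), (2 4), (1 3)(2 4)} and V_t = {id, (1 2), (3 4), (1 2)(3 4)}. (b) A 5-linear map T̃ : V⁵ → 𝕂 is an algebraic covariant derivative curvature tensor if and only if y_{t'}* T̃ = 24·T̃. -/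

import Mathlib

/-- The action of a group-algebra element `a ∈ 𝕂[S_r]` on an `r`-linear map:
`(aT)(v₁,…,v_r) = Σ_p a(p)·T(v_{p(1)},…,v_{p(r)})`. -/
noncomputable def gaAct {𝕂 : Type*} [RCLike 𝕂] {V : Type*} [AddCommGroup V] [Module 𝕂 V]
    {r : ℕ} (a : MonoidAlgebra 𝕂 (Equiv.Perm (Fin r)))
    (T : MultilinearMap 𝕂 (fun _ : Fin r => V) 𝕂) :
    MultilinearMap 𝕂 (fun _ : Fin r => V) 𝕂 :=
  ∑ p : Equiv.Perm (Fin r), a.coeff p • T.domDomCongr p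

/-- The star map `a = Σ_p a(p)·p ↦ a* = Σ_p a(p)·p⁻¹` on the group algebra. -/
noncomputable def gaStar {𝕂 : Type*} [RCLike 𝕂] {r : ℕ}
    (a : MonoidAlgebra 𝕂 (Equiv.Perm (Fin r))) : MonoidAlgebra 𝕂 (Equiv.Perm (Fin r)) :=
  ∑ p : Equiv.Perm (Fin r), MonoidAlgebra.single p⁻¹ (a.coeff p)

/-- The horizontal group `H_t = {id, (1 3), (2 4), (1 3)(2 4)}` of the tableau `t`
with rows `(1,3)` and `(2,4)` (0-based transpositions of `{0,2}` and `{1,3}`). -/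
def horizT : Finset (Equiv.Perm (Fin 4)) :=
  {1, Equiv.swap 0 2, Equiv.swap 1 3, Equiv.swap 0 2 * Equiv.swap 1 3}

/-- The vertical group `V_t = {id, (1 2), (3 4), (1 2)(3 4)}` of `t`
(0-based transpositions of `{0,1}` and `{2,3}`). -/
def vertT : Finset (Equiv.Perm (Fin 4)) :=
  {1, Equiv.swap 0 1, Equiv.swap 2 3, Equiv.swap 0 1 * Equiv.swap 2 3}

/-- The Young symmetrizer `y_t = Σ_{p∈H_t} Σ_{q∈V_t} sign(q)·(p∘q)` of the tableau `t`
with rows `(1,3)` and `(2,4)`. -/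
noncomputable def youngT (𝕂 : Type*) [RCLike 𝕂] : MonoidAlgebra 𝕂 (Equiv.Perm (Fin 4)) :=
  ∑ p ∈ horizT, ∑ q ∈ vertT,
    MonoidAlgebra.single (p * q) (((Equiv.Perm.sign q : ℤ) : 𝕂))

/-- The horizontal group `H_{t'}` of the tableau `t'` with rows `(1,3,5)` and `(2,4)`
(0-based: rows `{0,2,4}` and `{1,3}`): all permutations mapping each row to itself. -/
def horizT' : Finset (Equiv.Perm (Fin 5)) :=
  Finset.univ.filter fun p =>
    (∀ i ∈ ({0, 2, 4} : Finset (Fin 5)), p i ∈ ({0, 2, 4} : Finset (Fin 5))) ∧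
    (∀ i ∈ ({1, 3} : Finset (Fin 5)), p i ∈ ({1, 3} : Finset (Fin 5)))

/-- The vertical group `V_{t'}` of `t'`: all permutations mapping each of the columns
`{1,2}` and `{3,4}` (0-based `{0,1}`, `{2,3}`) to itself and fixing `5` (0-based `4`). -/
def vertT' : Finset (Equiv.Perm (Fin 5)) :=
  Finset.univ.filter fun p =>
    (∀ i ∈ ({0, 1} : Finset (Fin 5)), p i ∈ ({0, 1} : Finset (Fin 5))) ∧
    (∀ i ∈ ({2, 3} : Finset (Fin 5)), p i ∈ ({2, 3} : Finset (Fin 5))) ∧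
    p 4 = 4

/-- The Young symmetrizer `y_{t'} = Σ_{p∈H_{t'}} Σ_{q∈V_{t'}} sign(q)·(p∘q)`. -/
noncomputable def youngT' (𝕂 : Type*) [RCLike 𝕂] : MonoidAlgebra 𝕂 (Equiv.Perm (Fin 5)) :=
  ∑ p ∈ horizT', ∑ q ∈ vertT',
    MonoidAlgebra.single (p * q) (((Equiv.Perm.sign q : ℤ) : 𝕂))

/-- An algebraic curvature tensor. -/
def IsACT {𝕂 : Type*} [RCLike 𝕂] {V : Type*} [AddCommGroup V] [Module 𝕂 V]
    (T : MultilinearMap 𝕂 (fun _ : Fin 4 => V) 𝕂) : Prop :=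
  ∀ w x y z : V,
    T ![w, x, y, z] = - T ![w, x, z, y] ∧
    T ![w, x, y, z] = T ![y, z, w, x] ∧
    T ![w, x, y, z] + T ![w, y, z, x] + T ![w, z, x, y] = 0

/-- An algebraic covariant derivative curvature tensor. -/
def IsACDCT {𝕂 : Type*} [RCLike 𝕂] {V : Type*} [AddCommGroup V] [Module 𝕂 V]
    (T : MultilinearMap 𝕂 (fun _ : Fin 5 => V) 𝕂) : Prop :=
  ∀ u w x y z : V,
    T ![w, x, y, z, u] = - T ![w, x, z, y, u] ∧
    T ![w, x, y, z, u] = T ![y, z, w, x, u] ∧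
    T ![w, x, y, z, u] + T ![w, y, z, x, u] + T ![w, z, x, y, u] = 0 ∧
    T ![w, x, y, z, u] + T ![w, x, z, u, y] + T ![w, x, u, y, z] = 0

/-!
Because `H_t` and `V_t` are closed under inversion, `y_t*` acts as the column antisymmetrizer
after the row symmetrizer. If `y_t* T = 12 T`, then `T` is a multiple of the column
antisymmetrization of a tensor invariant under the row transpositions `(1 3)` and `(2 4)`
(1-based, as in the paper), and these symmetries alone yield the pair symmetry and the first
Bianchi identity. Conversely, for an algebraic curvature tensor pair symmetry turns the row
symmetrization into `2 (T + T ∘ (1 3))`; column antisymmetrization sends `T` to `4 T` and, by the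
Bianchi identity, `T ∘ (1 3)` to `2 T`.

For `t'` the row symmetrization is additionally invariant under `(3 5)`, which gives the second
Bianchi identity. For an algebraic covariant derivative curvature tensor it reduces to twice the
sum of `T ∘ σ` over the permutations `σ` of `{1, 3, 5}`. Column antisymmetrization sends these
terms to `4 T` and `2 T` as before for `σ = id, (1 3)`, and, by the second Bianchi identity, to
`2 T` for `σ = (1 5), (3 5)` and to `T` for the two 3-cycles: `12 T` in total.
-/

open Equiv Finset MultilinearMap

theorem Finset.sum_comp_inv_of_inv_mem {G M : Type*} [Group G] [AddCommMonoid M] {s : Finset G}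
    (hs : ∀ g ∈ s, g⁻¹ ∈ s) (f : G → M) : ∑ g ∈ s, f g⁻¹ = ∑ g ∈ s, f g :=
  Finset.sum_nbij' (·⁻¹) (·⁻¹) hs hs (by simp) (by simp) (by simp)

section GroupAlgebra

variable {𝕂 : Type*} [RCLike 𝕂] {V : Type*} [AddCommGroup V] [Module 𝕂 V] {r : ℕ}

theorem gaStar_add (a b : MonoidAlgebra 𝕂 (Perm (Fin r))) :
    gaStar (a + b) = gaStar a + gaStar b := by
  simp [gaStar, Finset.sum_add_distrib]

theorem gaStar_single (g : Perm (Fin r)) (c : 𝕂) :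
    gaStar (MonoidAlgebra.single g c) = MonoidAlgebra.single g⁻¹ c := by
  rw [gaStar, Finset.sum_eq_single g]
  · simp
  · intro p _ hp
    simp [MonoidAlgebra.coeff_single, Ne.symm hp]
  · simp

theorem gaAct_add (a b : MonoidAlgebra 𝕂 (Perm (Fin r)))
    (T : MultilinearMap 𝕂 (fun _ : Fin r => V) 𝕂) :
    gaAct (a + b) T = gaAct a T + gaAct b T := by
  simp [gaAct, add_smul, Finset.sum_add_distrib]

theorem gaAct_single (g : Perm (Fin r)) (c : 𝕂)
    (T : MultilinearMap 𝕂 (fun _ : Fin r => V) 𝕂) :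
    gaAct (MonoidAlgebra.single g c) T = c • T.domDomCongr g := by
  rw [gaAct, Finset.sum_eq_single g]
  · simp
  · intro p _ hp
    simp [MonoidAlgebra.coeff_single, Ne.symm hp]
  · simp

theorem gaAct_gaStar_sum {ι : Type*} (s : Finset ι) (a : ι → MonoidAlgebra 𝕂 (Perm (Fin r)))
    (T : MultilinearMap 𝕂 (fun _ : Fin r => V) 𝕂) :
    gaAct (gaStar (∑ i ∈ s, a i)) T = ∑ i ∈ s, gaAct (gaStar (a i)) T :=
  map_sum (AddMonoidHom.mk' (fun a => gaAct (gaStar a) T) fun a b => by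
    simp only [gaStar_add, gaAct_add]) a s

end GroupAlgebra

namespace MultilinearMap

variable {𝕂 : Type*} [RCLike 𝕂] {V : Type*} [AddCommGroup V] [Module 𝕂 V] {r n : ℕ}

noncomputable def symmetrize (s : Finset (Perm (Fin r)))
    (T : MultilinearMap 𝕂 (fun _ : Fin r => V) 𝕂) :
    MultilinearMap 𝕂 (fun _ : Fin r => V) 𝕂 :=
  ∑ p ∈ s, T.domDomCongr p

noncomputable def antisymmetrize (s : Finset (Perm (Fin r)))
    (T : MultilinearMap 𝕂 (fun _ : Fin r => V) 𝕂) :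
    MultilinearMap 𝕂 (fun _ : Fin r => V) 𝕂 :=
  ∑ q ∈ s, ((Perm.sign q : ℤ) : 𝕂) • T.domDomCongr q

theorem antisymmetrize_add (s : Finset (Perm (Fin r)))
    (T T' : MultilinearMap 𝕂 (fun _ : Fin r => V) 𝕂) :
    antisymmetrize s (T + T') = antisymmetrize s T + antisymmetrize s T' := by
  ext v
  simp [antisymmetrize, Finset.sum_add_distrib, mul_add]

theorem antisymmetrize_smul (s : Finset (Perm (Fin r))) (c : 𝕂)
    (T : MultilinearMap 𝕂 (fun _ : Fin r => V) 𝕂) :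
    antisymmetrize s (c • T) = c • antisymmetrize s T := by
  ext v
  simp [antisymmetrize, Finset.mul_sum, mul_left_comm]

theorem gaAct_gaStar_youngSymmetrizer (s t : Finset (Perm (Fin r))) (hs : ∀ p ∈ s, p⁻¹ ∈ s)
    (ht : ∀ q ∈ t, q⁻¹ ∈ t) (T : MultilinearMap 𝕂 (fun _ : Fin r => V) 𝕂) :
    gaAct (gaStar (∑ p ∈ s, ∑ q ∈ t,
        MonoidAlgebra.single (p * q) ((Perm.sign q : ℤ) : 𝕂))) T =
      antisymmetrize t (symmetrize s T) := by
  simp only [gaAct_gaStar_sum, gaStar_single, gaAct_single, mul_inv_rev]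
  rw [Finset.sum_comm]
  ext v
  simp only [antisymmetrize, symmetrize, _root_.sum_apply, _root_.smul_apply, domDomCongr_apply,
    smul_eq_mul, Finset.mul_sum]
  rw [← Finset.sum_comp_inv_of_inv_mem ht]
  refine Finset.sum_congr rfl fun q _ => ?_
  rw [← Finset.sum_comp_inv_of_inv_mem hs]
  simp only [Perm.sign_inv]
  rfl

noncomputable def sliceLast (T : MultilinearMap 𝕂 (fun _ : Fin (n + 1) => V) 𝕂) (e : V) :
    MultilinearMap 𝕂 (fun _ : Fin n => V) 𝕂 :=
  (LinearMap.applyₗ e).compMultilinearMap T.curryRight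

@[simp]
theorem sliceLast_apply (T : MultilinearMap 𝕂 (fun _ : Fin (n + 1) => V) 𝕂) (e : V)
    (v : Fin n → V) : T.sliceLast e v = T (Fin.snoc v e) := by
  simp [sliceLast]

theorem domDomCongr_apply_vec_four (T : MultilinearMap 𝕂 (fun _ : Fin 4 => V) 𝕂)
    (σ : Perm (Fin 4)) (v : Fin 4 → V) :
    T.domDomCongr σ v = T ![v (σ 0), v (σ 1), v (σ 2), v (σ 3)] :=
  congrArg T (funext fun i => by fin_cases i <;> rfl)

theorem domDomCongr_apply_vec_five (T : MultilinearMap 𝕂 (fun _ : Fin 5 => V) 𝕂)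
    (σ : Perm (Fin 5)) (v : Fin 5 → V) :
    T.domDomCongr σ v = T ![v (σ 0), v (σ 1), v (σ 2), v (σ 3), v (σ 4)] :=
  congrArg T (funext fun i => by fin_cases i <;> rfl)

theorem ext_vec_four {T T' : MultilinearMap 𝕂 (fun _ : Fin 4 => V) 𝕂}
    (h : ∀ a b c d, T ![a, b, c, d] = T' ![a, b, c, d]) : T = T' :=
  ext fun v => by rw [← FinVec.etaExpand_eq v]; exact h _ _ _ _

theorem ext_vec_five {T T' : MultilinearMap 𝕂 (fun _ : Fin 5 => V) 𝕂}
    (h : ∀ a b c d e, T ![a, b, c, d, e] = T' ![a, b, c, d, e]) : T = T' :=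
  ext fun v => by rw [← FinVec.etaExpand_eq v]; exact h _ _ _ _ _

end MultilinearMap

section Tableaux

variable {𝕂 : Type*} [RCLike 𝕂] {V : Type*} [AddCommGroup V] [Module 𝕂 V]

theorem inv_mem_horizT : ∀ p ∈ horizT, p⁻¹ ∈ horizT := by decide

theorem inv_mem_vertT : ∀ q ∈ vertT, q⁻¹ ∈ vertT := by decide

theorem horizT'_eq : horizT' = {1, swap 0 2, swap 0 4, swap 2 4, swap 0 2 * swap 0 4,
    swap 0 4 * swap 0 2, swap 1 3, swap 0 2 * swap 1 3, swap 0 4 * swap 1 3, swap 2 4 * swap 1 3,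
    swap 0 2 * swap 0 4 * swap 1 3, swap 0 4 * swap 0 2 * swap 1 3} := by
  decide

theorem vertT'_eq : vertT' = {1, swap 0 1, swap 2 3, swap 0 1 * swap 2 3} := by
  decide

set_option maxRecDepth 10000 in
theorem inv_mem_horizT' : ∀ p ∈ horizT', p⁻¹ ∈ horizT' := by
  rw [horizT'_eq]; decide

set_option maxRecDepth 10000 in
theorem inv_mem_vertT' : ∀ q ∈ vertT', q⁻¹ ∈ vertT' := by
  rw [vertT'_eq]; decide

theorem gaAct_gaStar_youngT (T : MultilinearMap 𝕂 (fun _ : Fin 4 => V) 𝕂) :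
    gaAct (gaStar (youngT 𝕂)) T = antisymmetrize vertT (symmetrize horizT T) :=
  gaAct_gaStar_youngSymmetrizer _ _ inv_mem_horizT inv_mem_vertT T

theorem gaAct_gaStar_youngT' (T : MultilinearMap 𝕂 (fun _ : Fin 5 => V) 𝕂) :
    gaAct (gaStar (youngT' 𝕂)) T = antisymmetrize vertT' (symmetrize horizT' T) :=
  gaAct_gaStar_youngSymmetrizer _ _ inv_mem_horizT' inv_mem_vertT' T

theorem symmetrize_horizT_apply (T : MultilinearMap 𝕂 (fun _ : Fin 4 => V) 𝕂) (a b c d : V) :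
    symmetrize horizT T ![a, b, c, d] =
      T ![a, b, c, d] + T ![c, b, a, d] + T ![a, d, c, b] + T ![c, d, a, b] := by
  simp only [symmetrize, _root_.sum_apply, domDomCongr_apply_vec_four]
  simp (config := { decide := true }) only [horizT, sum_insert, mem_insert, mem_singleton,
    not_false_eq_true, sum_singleton, Perm.coe_one, id_eq, Perm.coe_mul, Function.comp_apply,
    swap_apply_left, swap_apply_right, swap_apply_of_ne_of_ne, ne_eq, Matrix.cons_val_zero,
    Matrix.cons_val_one, Matrix.cons_val]
  ring

theorem antisymmetrize_vertT_apply (T : MultilinearMap 𝕂 (fun _ : Fin 4 => V) 𝕂)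
    (a b c d : V) :
    antisymmetrize vertT T ![a, b, c, d] =
      T ![a, b, c, d] - T ![b, a, c, d] - T ![a, b, d, c] + T ![b, a, d, c] := by
  simp only [antisymmetrize, _root_.sum_apply, _root_.smul_apply, domDomCongr_apply_vec_four]
  simp (config := { decide := true }) only [vertT, sum_insert, mem_insert, mem_singleton,
    not_false_eq_true, sum_singleton, Perm.coe_one, id_eq, Perm.coe_mul, Function.comp_apply,
    swap_apply_left, swap_apply_right, swap_apply_of_ne_of_ne, ne_eq, Matrix.cons_val_zero,
    Matrix.cons_val_one, Matrix.cons_val, Perm.sign_one, Perm.sign_swap', Perm.sign_mul,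
    ↓reduceIte, Units.val_one, Units.val_neg, Int.reduceNeg, Int.cast_one, Int.cast_neg,
    smul_eq_mul, one_mul, neg_mul, mul_neg, mul_one, neg_neg]
  ring

theorem symmetrize_horizT'_apply (T : MultilinearMap 𝕂 (fun _ : Fin 5 => V) 𝕂)
    (a b c d e : V) :
    symmetrize horizT' T ![a, b, c, d, e] =
      T ![a, b, c, d, e] + T ![c, b, a, d, e] + T ![e, b, c, d, a] + T ![a, b, e, d, c] +
        T ![e, b, a, d, c] + T ![c, b, e, d, a] +
      (T ![a, d, c, b, e] + T ![c, d, a, b, e] + T ![e, d, c, b, a] + T ![a, d, e, b, c] +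
        T ![e, d, a, b, c] + T ![c, d, e, b, a]) := by
  rw [horizT'_eq]
  simp only [symmetrize, _root_.sum_apply, domDomCongr_apply_vec_five]
  simp (config := { decide := true }) only [sum_insert, mem_insert, mem_singleton,
    not_false_eq_true, sum_singleton, Perm.coe_one, id_eq, Perm.coe_mul, Function.comp_apply,
    swap_apply_left, swap_apply_right, swap_apply_of_ne_of_ne, ne_eq, Matrix.cons_val_zero,
    Matrix.cons_val_one, Matrix.cons_val]
  ring

theorem antisymmetrize_vertT'_apply (T : MultilinearMap 𝕂 (fun _ : Fin 5 => V) 𝕂)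
    (a b c d e : V) :
    antisymmetrize vertT' T ![a, b, c, d, e] =
      T ![a, b, c, d, e] - T ![b, a, c, d, e] - T ![a, b, d, c, e] + T ![b, a, d, c, e] := by
  rw [vertT'_eq]
  simp only [antisymmetrize, _root_.sum_apply, _root_.smul_apply, domDomCongr_apply_vec_five]
  simp (config := { decide := true }) only [sum_insert, mem_insert, mem_singleton,
    not_false_eq_true, sum_singleton, Perm.coe_one, id_eq, Perm.coe_mul, Function.comp_apply,
    swap_apply_left, swap_apply_right, swap_apply_of_ne_of_ne, ne_eq, Matrix.cons_val_zero,
    Matrix.cons_val_one, Matrix.cons_val, Perm.sign_one, Perm.sign_swap', Perm.sign_mul,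
    ↓reduceIte, Units.val_one, Units.val_neg, Int.reduceNeg, Int.cast_one, Int.cast_neg,
    smul_eq_mul, one_mul, neg_mul, mul_neg, mul_one, neg_neg]
  ring

end Tableaux

namespace IsACT

variable {𝕂 : Type*} [RCLike 𝕂] {V : Type*} [AddCommGroup V] [Module 𝕂 V]
  {T : MultilinearMap 𝕂 (fun _ : Fin 4 => V) 𝕂}

theorem antisymm_right (h : IsACT T) (a b c d : V) : T ![a, b, d, c] = -T ![a, b, c, d] := by
  linear_combination (h a b c d).1

theorem pair_symm (h : IsACT T) (a b c d : V) : T ![c, d, a, b] = T ![a, b, c, d] :=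
  (h a b c d).2.1.symm

theorem bianchi (h : IsACT T) (a b c d : V) :
    T ![a, b, c, d] + T ![a, c, d, b] + T ![a, d, b, c] = 0 :=
  (h a b c d).2.2

theorem antisymm_left (h : IsACT T) (a b c d : V) : T ![b, a, c, d] = -T ![a, b, c, d] := by
  linear_combination h.pair_symm c d b a + h.antisymm_right c d a b - h.pair_symm a b c d

theorem sub_swap (h : IsACT T) (a b c d : V) :
    T ![a, b, c, d] - T ![d, b, c, a] = T ![a, d, c, b] := by
  linear_combination -h.pair_symm c a d b - h.antisymm_left a c d b + h.bianchi a b c d -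
    h.antisymm_right a d b c

theorem smul (h : IsACT T) (c : 𝕂) : IsACT (c • T) := fun w x y z => by
  obtain ⟨h₁, h₂, h₃⟩ := h w x y z
  simp only [smul_apply, smul_eq_mul]
  exact ⟨by rw [h₁, mul_neg], by rw [h₂], by linear_combination c * h₃⟩

theorem symmetrize_horizT (h : IsACT T) :
    symmetrize horizT T = (2 : 𝕂) • (T + T.domDomCongr (swap 0 2)) :=
  ext_vec_four fun a b c d => by
    simp only [symmetrize_horizT_apply, smul_apply, smul_eq_mul, add_apply,
      domDomCongr_apply_vec_four, swap_apply_left, swap_apply_right, swap_apply_of_ne_of_ne, ne_eq,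
      Fin.reduceEq, not_false_eq_true, Matrix.cons_val]
    linear_combination h.pair_symm c b a d + h.pair_symm a b c d

theorem antisymmetrize_vertT (h : IsACT T) : antisymmetrize vertT T = (4 : 𝕂) • T :=
  ext_vec_four fun a b c d => by
    rw [antisymmetrize_vertT_apply, smul_apply, smul_eq_mul]
    linear_combination -h.antisymm_left a b c d - 2 * h.antisymm_right a b c d +
      h.antisymm_left a b d c

theorem antisymmetrize_vertT_domDomCongr_swap_zero_two (h : IsACT T) :
    antisymmetrize vertT (T.domDomCongr (swap 0 2)) = (2 : 𝕂) • T :=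
  ext_vec_four fun a b c d => by
    simp only [antisymmetrize_vertT_apply, smul_apply, smul_eq_mul, domDomCongr_apply_vec_four,
      swap_apply_left, swap_apply_right, swap_apply_of_ne_of_ne, ne_eq, Fin.reduceEq,
      not_false_eq_true, Matrix.cons_val]
    linear_combination h.sub_swap c b a d - h.sub_swap c a b d + 2 * h.pair_symm a b c d -
      h.antisymm_right c d a b

theorem gaAct_gaStar_youngT (h : IsACT T) : gaAct (gaStar (youngT 𝕂)) T = (12 : 𝕂) • T := by
  rw [_root_.gaAct_gaStar_youngT, h.symmetrize_horizT, antisymmetrize_smul, antisymmetrize_add,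
    h.antisymmetrize_vertT, h.antisymmetrize_vertT_domDomCongr_swap_zero_two]
  module

end IsACT

section

variable {𝕂 : Type*} [RCLike 𝕂] {V : Type*} [AddCommGroup V] [Module 𝕂 V]

theorem isACT_antisymmetrize_vertT (Y : MultilinearMap 𝕂 (fun _ : Fin 4 => V) 𝕂)
    (h02 : ∀ a b c d, Y ![c, b, a, d] = Y ![a, b, c, d])
    (h13 : ∀ a b c d, Y ![a, d, c, b] = Y ![a, b, c, d]) : IsACT (antisymmetrize vertT Y) := by
  intro w x y z
  simp only [antisymmetrize_vertT_apply]
  refine ⟨by ring, ?_, ?_⟩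
  · linear_combination -h13 w x y z + h13 w x z y + h02 w y z x - h02 w z y x + h13 x w y z -
      h13 x w z y - h02 x y z w + h02 x z y w
  · linear_combination -h13 w x y z + h13 w x z y + h13 w y x z + h02 x w y z - h02 x w z y +
      h02 y w z x

theorem isACT_of_gaAct_gaStar_youngT_eq {T : MultilinearMap 𝕂 (fun _ : Fin 4 => V) 𝕂}
    (h : gaAct (gaStar (youngT 𝕂)) T = (12 : 𝕂) • T) : IsACT T := by
  have hT : T = (12 : 𝕂)⁻¹ • gaAct (gaStar (youngT 𝕂)) T := by
    rw [h, smul_smul, inv_mul_cancel₀ (by norm_num), one_smul]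
  rw [hT, gaAct_gaStar_youngT]
  refine (isACT_antisymmetrize_vertT _ (fun a b c d => ?_) (fun a b c d => ?_)).smul _ <;>
    simp only [symmetrize_horizT_apply] <;> ring

theorem isACDCT_iff {T : MultilinearMap 𝕂 (fun _ : Fin 5 => V) 𝕂} :
    IsACDCT T ↔ (∀ u, IsACT (T.sliceLast u)) ∧
      ∀ u w x y z, T ![w, x, y, z, u] + T ![w, x, z, u, y] + T ![w, x, u, y, z] = 0 := by
  simp only [IsACDCT, IsACT, sliceLast_apply, Matrix.Fin.snoc_vecCons, Matrix.Fin.snoc_vecEmpty,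
    ← forall_and, and_assoc]

end

namespace IsACDCT

variable {𝕂 : Type*} [RCLike 𝕂] {V : Type*} [AddCommGroup V] [Module 𝕂 V]
  {T : MultilinearMap 𝕂 (fun _ : Fin 5 => V) 𝕂}

theorem isACT_sliceLast (h : IsACDCT T) (e : V) : IsACT (T.sliceLast e) :=
  (isACDCT_iff.1 h).1 e

theorem antisymm_left (h : IsACDCT T) (a b c d e : V) :
    T ![b, a, c, d, e] = -T ![a, b, c, d, e] := by
  simpa using (h.isACT_sliceLast e).antisymm_left a b c d

theorem antisymm_right (h : IsACDCT T) (a b c d e : V) :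
    T ![a, b, d, c, e] = -T ![a, b, c, d, e] := by
  simpa using (h.isACT_sliceLast e).antisymm_right a b c d

theorem pair_symm (h : IsACDCT T) (a b c d e : V) : T ![c, d, a, b, e] = T ![a, b, c, d, e] := by
  simpa using (h.isACT_sliceLast e).pair_symm a b c d

theorem sub_swap (h : IsACDCT T) (a b c d e : V) :
    T ![a, b, c, d, e] - T ![d, b, c, a, e] = T ![a, d, c, b, e] := by
  simpa using (h.isACT_sliceLast e).sub_swap a b c d

theorem sub_swap_last (h : IsACDCT T) (a b c d e : V) :
    T ![a, b, e, d, c] - T ![a, b, e, c, d] = T ![a, b, c, d, e] := by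
  linear_combination h.antisymm_right a b d e c - (h e a b c d).2.2.2

theorem smul (h : IsACDCT T) (c : 𝕂) : IsACDCT (c • T) := fun u w x y z => by
  obtain ⟨h₁, h₂, h₃, h₄⟩ := h u w x y z
  simp only [smul_apply, smul_eq_mul]
  exact ⟨by rw [h₁, mul_neg], by rw [h₂], by linear_combination c * h₃,
    by linear_combination c * h₄⟩

theorem symmetrize_horizT' (h : IsACDCT T) :
    symmetrize horizT' T = (2 : 𝕂) • (T + T.domDomCongr (swap 0 2) + T.domDomCongr (swap 0 4) +
      T.domDomCongr (swap 2 4) + T.domDomCongr (swap 0 2 * swap 0 4) +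
      T.domDomCongr (swap 0 4 * swap 0 2)) :=
  ext_vec_five fun a b c d e => by
    simp only [symmetrize_horizT'_apply, smul_apply, smul_eq_mul, add_apply,
      domDomCongr_apply_vec_five, Perm.coe_mul, Function.comp_apply, swap_apply_left,
      swap_apply_right, swap_apply_of_ne_of_ne, ne_eq, Fin.reduceEq, not_false_eq_true,
      Matrix.cons_val]
    linear_combination h.pair_symm c b a d e + h.pair_symm a b c d e + h.pair_symm c b e d a +
      h.pair_symm e b a d c + h.pair_symm a b e d c + h.pair_symm e b c d a

theorem antisymmetrize_vertT' (h : IsACDCT T) : antisymmetrize vertT' T = (4 : 𝕂) • T :=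
  ext_vec_five fun a b c d e => by
    rw [antisymmetrize_vertT'_apply, smul_apply, smul_eq_mul]
    linear_combination -h.antisymm_left a b c d e - 2 * h.antisymm_right a b c d e +
      h.antisymm_left a b d c e

theorem antisymmetrize_vertT'_domDomCongr_swap_zero_two (h : IsACDCT T) :
    antisymmetrize vertT' (T.domDomCongr (swap 0 2)) = (2 : 𝕂) • T :=
  ext_vec_five fun a b c d e => by
    simp only [antisymmetrize_vertT'_apply, smul_apply, smul_eq_mul, domDomCongr_apply_vec_five,
      swap_apply_left, swap_apply_right, swap_apply_of_ne_of_ne, ne_eq, Fin.reduceEq,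
      not_false_eq_true, Matrix.cons_val]
    linear_combination h.sub_swap c b a d e - h.sub_swap c a b d e + 2 * h.pair_symm a b c d e -
      h.antisymm_right c d a b e

theorem antisymmetrize_vertT'_domDomCongr_swap_two_four (h : IsACDCT T) :
    antisymmetrize vertT' (T.domDomCongr (swap 2 4)) = (2 : 𝕂) • T :=
  ext_vec_five fun a b c d e => by
    simp only [antisymmetrize_vertT'_apply, smul_apply, smul_eq_mul, domDomCongr_apply_vec_five,
      swap_apply_left, swap_apply_right, swap_apply_of_ne_of_ne, ne_eq, Fin.reduceEq,
      not_false_eq_true, Matrix.cons_val]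
    linear_combination -h.antisymm_left a b e d c + h.antisymm_left a b e c d +
      2 * h.sub_swap_last a b c d e

theorem antisymmetrize_vertT'_domDomCongr_swap_zero_four (h : IsACDCT T) :
    antisymmetrize vertT' (T.domDomCongr (swap 0 4)) = (2 : 𝕂) • T :=
  ext_vec_five fun a b c d e => by
    simp only [antisymmetrize_vertT'_apply, smul_apply, smul_eq_mul, domDomCongr_apply_vec_five,
      swap_apply_left, swap_apply_right, swap_apply_of_ne_of_ne, ne_eq, Fin.reduceEq,
      not_false_eq_true, Matrix.cons_val]
    linear_combination -h.antisymm_right e b c d a + h.antisymm_right e a c d b +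
      2 * h.pair_symm c d e b a - 2 * h.pair_symm c d e a b + 2 * h.sub_swap_last c d a b e +
      2 * h.pair_symm a b c d e

theorem antisymmetrize_vertT'_domDomCongr_swap_zero_four_mul_swap_zero_two (h : IsACDCT T) :
    antisymmetrize vertT' (T.domDomCongr (swap 0 4 * swap 0 2)) = T :=
  ext_vec_five fun a b c d e => by
    simp only [antisymmetrize_vertT'_apply, domDomCongr_apply_vec_five, Perm.coe_mul,
      Function.comp_apply, swap_apply_left, swap_apply_right, swap_apply_of_ne_of_ne, ne_eq,
      Fin.reduceEq, not_false_eq_true, Matrix.cons_val]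
    linear_combination h.sub_swap c b e d a - h.sub_swap c a e d b + h.sub_swap_last c d a b e +
      h.pair_symm a b c d e

theorem antisymmetrize_vertT'_domDomCongr_swap_zero_two_mul_swap_zero_four (h : IsACDCT T) :
    antisymmetrize vertT' (T.domDomCongr (swap 0 2 * swap 0 4)) = T :=
  ext_vec_five fun a b c d e => by
    simp only [antisymmetrize_vertT'_apply, domDomCongr_apply_vec_five, Perm.coe_mul,
      Function.comp_apply, swap_apply_left, swap_apply_right, swap_apply_of_ne_of_ne, ne_eq,
      Fin.reduceEq, not_false_eq_true, Matrix.cons_val]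
    linear_combination h.sub_swap_last e b c d a - h.sub_swap_last e a c d b +
      h.pair_symm c d e b a - h.pair_symm c d e a b + h.sub_swap_last c d a b e +
      h.pair_symm a b c d e

theorem gaAct_gaStar_youngT' (h : IsACDCT T) :
    gaAct (gaStar (youngT' 𝕂)) T = (24 : 𝕂) • T := by
  rw [_root_.gaAct_gaStar_youngT', h.symmetrize_horizT', antisymmetrize_smul]
  simp only [antisymmetrize_add, h.antisymmetrize_vertT',
    h.antisymmetrize_vertT'_domDomCongr_swap_zero_two,
    h.antisymmetrize_vertT'_domDomCongr_swap_zero_four,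
    h.antisymmetrize_vertT'_domDomCongr_swap_two_four,
    h.antisymmetrize_vertT'_domDomCongr_swap_zero_two_mul_swap_zero_four,
    h.antisymmetrize_vertT'_domDomCongr_swap_zero_four_mul_swap_zero_two]
  module

end IsACDCT

section

variable {𝕂 : Type*} [RCLike 𝕂] {V : Type*} [AddCommGroup V] [Module 𝕂 V]

theorem sliceLast_antisymmetrize_vertT' (Y : MultilinearMap 𝕂 (fun _ : Fin 5 => V) 𝕂)
    (u : V) :
    (antisymmetrize vertT' Y).sliceLast u = antisymmetrize vertT (Y.sliceLast u) :=
  ext_vec_four fun a b c d => by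
    simp [antisymmetrize_vertT'_apply, antisymmetrize_vertT_apply]

theorem isACDCT_antisymmetrize_vertT' (Y : MultilinearMap 𝕂 (fun _ : Fin 5 => V) 𝕂)
    (h02 : ∀ a b c d e, Y ![c, b, a, d, e] = Y ![a, b, c, d, e])
    (h13 : ∀ a b c d e, Y ![a, d, c, b, e] = Y ![a, b, c, d, e])
    (h24 : ∀ a b c d e, Y ![a, b, e, d, c] = Y ![a, b, c, d, e]) :
    IsACDCT (antisymmetrize vertT' Y) := by
  refine isACDCT_iff.2 ⟨fun u => ?_, fun u w x y z => ?_⟩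
  · rw [sliceLast_antisymmetrize_vertT']
    exact isACT_antisymmetrize_vertT _ (fun a b c d => by simpa using h02 a b c d u)
      (fun a b c d => by simpa using h13 a b c d u)
  · simp only [antisymmetrize_vertT'_apply]
    linear_combination -h24 w x y z u + h24 w x y u z + h24 w x z y u + h24 x w y z u -
      h24 x w y u z - h24 x w z y u

theorem isACDCT_of_gaAct_gaStar_youngT'_eq {T : MultilinearMap 𝕂 (fun _ : Fin 5 => V) 𝕂}
    (h : gaAct (gaStar (youngT' 𝕂)) T = (24 : 𝕂) • T) : IsACDCT T := by
  have hT : T = (24 : 𝕂)⁻¹ • gaAct (gaStar (youngT' 𝕂)) T := by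
    rw [h, smul_smul, inv_mul_cancel₀ (by norm_num), one_smul]
  rw [hT, gaAct_gaStar_youngT']
  refine (isACDCT_antisymmetrize_vertT' _ (fun a b c d e => ?_) (fun a b c d e => ?_)
    (fun a b c d e => ?_)).smul _ <;> simp only [symmetrize_horizT'_apply] <;> ring

end

theorem stmt7 {𝕂 : Type*} [RCLike 𝕂] (V : Type*) [AddCommGroup V] [Module 𝕂 V] :
    (∀ T : MultilinearMap 𝕂 (fun _ : Fin 4 => V) 𝕂,
      IsACT T ↔ gaAct (gaStar (youngT 𝕂)) T = (12 : 𝕂) • T) ∧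
    (∀ T' : MultilinearMap 𝕂 (fun _ : Fin 5 => V) 𝕂,
      IsACDCT T' ↔ gaAct (gaStar (youngT' 𝕂)) T' = (24 : 𝕂) • T') :=
  ⟨fun _ => ⟨IsACT.gaAct_gaStar_youngT, isACT_of_gaAct_gaStar_youngT_eq⟩,
    fun _ => ⟨IsACDCT.gaAct_gaStar_youngT', isACDCT_of_gaAct_gaStar_youngT'_eq⟩⟩
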